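/- arXiv:1704.07435 — 2 statements merged into one kernel-verified Lean document; each statement's English description precedes it below -/
import Mathlib

section
/- For the gain K = P(P + S)⁻¹ with P, S symmetric positive definite, the updated covariance (I − K)P equals S(P + S)⁻¹P, and is symmetric positive definite with trace strictly less than trace(P). -/
/-!
Since `(P + S)(P + S)⁻¹ = 1`, the gain complement is `1 - P(P + S)⁻¹ = S(P + S)⁻¹`, and
`S(P + S)⁻¹P = (S⁻¹ + P⁻¹)⁻¹` because `S⁻¹ + P⁻¹ = P⁻¹(P + S)S⁻¹`; inverses and sums of positive
definite matrices are positive definite. The trace drops by `tr(P(P + S)⁻¹P)`, which is positive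
because `P(P + S)⁻¹P = Pᴴ(P + S)⁻¹P` is a congruence of a positive definite matrix.
-/

open Matrix

namespace Matrix

section CommRing

variable {n R : Type*} [Fintype n] [DecidableEq n] [CommRing R] {P S : Matrix n n R}

theorem one_sub_mul_inv_add_eq (h : IsUnit (P + S).det) :
    1 - P * (P + S)⁻¹ = S * (P + S)⁻¹ := by
  rw [← mul_nonsing_inv _ h, ← sub_mul, add_sub_cancel_left]

theorem mul_inv_add_mul_eq_inv_add_inv (hP : IsUnit P.det) (hS : IsUnit S.det) :
    S * (P + S)⁻¹ * P = (S⁻¹ + P⁻¹)⁻¹ := by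
  have h : S⁻¹ + P⁻¹ = P⁻¹ * (P + S) * S⁻¹ := by
    rw [mul_add, nonsing_inv_mul _ hP, add_mul, one_mul, mul_assoc, mul_nonsing_inv _ hS,
      mul_one, add_comm]
  rw [h, mul_inv_rev, mul_inv_rev, nonsing_inv_nonsing_inv _ hP,
    nonsing_inv_nonsing_inv _ hS, mul_assoc]

end CommRing

namespace PosDef

variable {n K : Type*} [Fintype n] [DecidableEq n] [Field K] [PartialOrder K] [StarRing K]
  {P S : Matrix n n K}

theorem mul_inv_add_mul [AddLeftMono K] (hP : P.PosDef) (hS : S.PosDef) :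
    (S * (P + S)⁻¹ * P).PosDef := by
  rw [mul_inv_add_mul_eq_inv_add_inv ((isUnit_iff_isUnit_det P).mp hP.isUnit)
    ((isUnit_iff_isUnit_det S).mp hS.isUnit)]
  exact (hS.inv.add hP.inv).inv

theorem trace_mul_inv_add_mul_lt [IsOrderedAddMonoid K] [Nonempty n] (hP : P.PosDef)
    (hS : S.PosDef) : (S * (P + S)⁻¹ * P).trace < P.trace := by
  have hPS := hP.add hS
  have hconj : (P * (P + S)⁻¹ * P).PosDef := by
    simpa only [star_eq_conjTranspose, hP.isHermitian.eq] using
      (IsUnit.posDef_star_left_conjugate_iff hP.isUnit).mpr hPS.inv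
  rw [← one_sub_mul_inv_add_eq ((isUnit_iff_isUnit_det _).mp hPS.isUnit), sub_mul, one_mul,
    trace_sub]
  exact sub_lt_self _ hconj.trace_pos

end PosDef

end Matrix

/-- For `K = P (P + S)⁻¹` with `P`, `S` symmetric positive definite, the updated
covariance `(I − K) P` equals `S (P + S)⁻¹ P`, is symmetric positive definite,
and has trace strictly less than `trace P`. -/
theorem dlf_updated_covariance_properties (N : ℕ) (hN : 0 < N)
    (P S : Matrix (Fin N) (Fin N) ℝ)
    (hP : P.PosDef) (hS : S.PosDef) :
    (1 - P * (P + S)⁻¹) * P = S * (P + S)⁻¹ * P ∧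
    ((1 - P * (P + S)⁻¹) * P).PosDef ∧
    ((1 - P * (P + S)⁻¹) * P).trace < P.trace := by
  have : Nonempty (Fin N) := Fin.pos_iff_nonempty.mp hN
  rw [one_sub_mul_inv_add_eq ((isUnit_iff_isUnit_det _).mp (hP.add hS).isUnit)]
  exact ⟨rfl, hP.mul_inv_add_mul hS, hP.trace_mul_inv_add_mul_lt hS⟩
end

section
/- If P̃ and S = Σ_{m'} H_{m'} R_{m'} H_{m'}ᵀ are symmetric with P̃ positive semidefinite and S positive definite, then the multi-analysis gain 𝒦 = P̃(P̃ + S)⁻¹ satisfies 0 ⪯ 𝒦 P̃ ⪯ P̃ in the Loewner order, i.e., both 𝒦P̃ and P̃ − 𝒦P̃ = (I − 𝒦)P̃ are symmetric positive semidefinite. -/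
open Matrix Finset

/-- If `P̃` is symmetric PSD and `S = Σ H_{m'} R_{m'} H_{m'}ᵀ` is symmetric
positive definite, then the multi-analysis gain `𝒦 = P̃ (P̃ + S)⁻¹` satisfies
`0 ⪯ 𝒦 P̃ ⪯ P̃` in the Loewner order: both `𝒦 P̃` and `P̃ − 𝒦 P̃ = (I − 𝒦) P̃`
are symmetric positive semidefinite. -/
theorem dlf_multianalysis_gain_loewner (N : ℕ) {ι : Type*} [Fintype ι]
    (Ptil : Matrix (Fin N) (Fin N) ℝ)
    (H R : ι → Matrix (Fin N) (Fin N) ℝ)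
    (S : Matrix (Fin N) (Fin N) ℝ)
    (hS : S = ∑ i, H i * R i * (H i)ᵀ)
    (hP : Ptil.PosSemidef) (hSpd : S.PosDef) :
    ((Ptil * (Ptil + S)⁻¹) * Ptil).PosSemidef ∧
    (Ptil - (Ptil * (Ptil + S)⁻¹) * Ptil).PosSemidef ∧
    Ptil - (Ptil * (Ptil + S)⁻¹) * Ptil = (1 - Ptil * (Ptil + S)⁻¹) * Ptil := by
  set M := Ptil + S with hM
  have hMpd : M.PosDef := Matrix.PosDef.posSemidef_add hP hSpd
  have hQpd : M⁻¹.PosDef := hMpd.inv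
  set Q := M⁻¹ with hQ
  have hPsym : Ptilᴴ = Ptil := hP.isHermitian
  have hSsym : Sᴴ = S := hSpd.isHermitian
  have hQsym : Qᴴ = Q := hQpd.isHermitian
  have hMunit : IsUnit M.det := isUnit_iff_ne_zero.mpr (ne_of_gt hMpd.det_pos)
  have hMQ : M * Q = 1 := mul_nonsing_inv M hMunit
  have hQM : Q * M = 1 := nonsing_inv_mul M hMunit
  have hPtil : Ptil = M - S := by rw [hM, add_sub_cancel_right]
  -- commutation: Ptil * Q * S = S * Q * Ptil
  have hcomm : Ptil * Q * S = S * Q * Ptil := by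
    have h1 : Ptil * Q * S = S - S * Q * S := by
      rw [hPtil, sub_mul, sub_mul, hMQ, one_mul]
    have h2 : S * Q * Ptil = S - S * Q * S := by
      rw [hPtil, mul_sub, mul_assoc S Q M, hQM, mul_one]
    rw [h1, h2]
  -- first part
  have h1 : ((Ptil * Q) * Ptil).PosSemidef := by
    have := hQpd.posSemidef.mul_mul_conjTranspose_same Ptil
    rwa [hPsym] at this
  -- key identity
  have hkey : Ptil - (Ptil * Q) * Ptil = Ptil * Q * S := by
    calc Ptil - Ptil * Q * Ptil = Ptil * Q * (M - Ptil) := by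
          rw [mul_sub, mul_assoc Ptil Q M, hQM, mul_one]
      _ = Ptil * Q * S := by rw [hM, add_sub_cancel_left]
  have hdecomp : Ptil * Q * S = (Ptil * Q) * S * (Ptil * Q)ᴴ + (S * Q) * Ptil * (S * Q)ᴴ := by
    have hPQH : (Ptil * Q)ᴴ = Q * Ptil := by rw [conjTranspose_mul, hPsym, hQsym]
    have hSQH : (S * Q)ᴴ = Q * S := by rw [conjTranspose_mul, hSsym, hQsym]
    rw [hPQH, hSQH]
    symm
    calc (Ptil * Q) * S * (Q * Ptil) + (S * Q) * Ptil * (Q * S)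
        = Ptil * Q * (S * Q * Ptil) + (S * Q * Ptil) * (Q * S) := by noncomm_ring
      _ = Ptil * Q * (Ptil * Q * S) + (Ptil * Q * S) * (Q * S) := by rw [hcomm]
      _ = Ptil * (Q * M) * (Q * S) := by rw [hM]; noncomm_ring
      _ = Ptil * Q * S := by rw [hQM, mul_one, ← mul_assoc]
  have h2 : (Ptil - (Ptil * Q) * Ptil).PosSemidef := by
    rw [hkey, hdecomp]
    exact (hSpd.posSemidef.mul_mul_conjTranspose_same (Ptil * Q)).add
      (hP.mul_mul_conjTranspose_same (S * Q))
  exact ⟨h1, h2, by rw [sub_mul, one_mul]⟩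
end
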